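/- For a uniformly random G from the ensemble G_{k,n}, the expected number of vectors m ∈ F_2^k with m M(G) = 0 equals Σ_{u=0}^{k} C(k,u) C(C(k,2) - u(k-u), n) / C(C(k,2), n). -/

import Mathlib

open scoped Classical

noncomputable section

/-- Incidence matrix over F_2 of an edge labeling `e`. -/
def inc {k n : ℕ} (e : Fin n → Sym2 (Fin k)) : Matrix (Fin k) (Fin n) (ZMod 2) :=
  Matrix.of fun i j => if i ∈ e j then 1 else 0

/-- Hamming weight of a binary vector. -/
def wt {d : ℕ} (x : Fin d → ZMod 2) : ℕ := (Finset.univ.filter fun i => x i ≠ 0).card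

/-- `e` is a valid member of the ensemble `G_{k,n}`: an injective labeling of
edges by unordered pairs of distinct vertices. -/
def IsGraph {k n : ℕ} (e : Fin n → Sym2 (Fin k)) : Prop :=
  Function.Injective e ∧ ∀ j, ¬ (e j).IsDiag

/-- The simple graph determined by the edge labeling. -/
def toGraph {k n : ℕ} (e : Fin n → Sym2 (Fin k)) : SimpleGraph (Fin k) :=
  SimpleGraph.fromEdgeSet (Set.range e)

/-- The ensemble `G_{k,n}`. -/
def Ens (k n : ℕ) := {e : Fin n → Sym2 (Fin k) // IsGraph e}

instance (k n : ℕ) : Fintype (Ens k n) := Subtype.fintype _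

/-- The unordered pair `s` crosses the cut `(V1, V1ᶜ)`. -/
def crosses {k : ℕ} (V1 : Finset (Fin k)) (s : Sym2 (Fin k)) : Prop :=
  ∃ a b, s = s(a, b) ∧ a ∈ V1 ∧ b ∉ V1

/-- `E'` is a cut-set of the graph given by `e`. -/
def IsCutSet {k n : ℕ} (e : Fin n → Sym2 (Fin k)) (E' : Finset (Fin n)) : Prop :=
  ∃ V1 : Finset (Fin k), E' = Finset.univ.filter fun j => crosses V1 (e j)

/-- Cut-set weight distribution `B_v(G)`. -/
def Bv {k n : ℕ} (e : Fin n → Sym2 (Fin k)) (v : ℕ) : ℕ :=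
  Nat.card {E' : Finset (Fin n) // IsCutSet e E' ∧ E'.card = v}

/-- Input–output weight distribution `A_{u,v}(G)`. -/
def Auv {k n : ℕ} (e : Fin n → Sym2 (Fin k)) (u v : ℕ) : ℕ :=
  Nat.card {p : (Fin k → ZMod 2) × (Fin n → ZMod 2) //
    wt p.1 = u ∧ wt p.2 = v ∧ Matrix.vecMul p.1 (inc e) = p.2}

/-- Survivor subgraph after the edges in `E'` fail. -/
def survivor {k n : ℕ} (e : Fin n → Sym2 (Fin k)) (E' : Finset (Fin n)) : SimpleGraph (Fin k) :=
  SimpleGraph.fromEdgeSet (e '' {j | j ∉ E'})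

/-- Network failure probability of a connected graph. -/
def Pf {k n : ℕ} (e : Fin n → Sym2 (Fin k)) (ε : ℝ) : ℝ :=
  ∑ E' : Finset (Fin n),
    (if ¬ (survivor e E').Connected then ε ^ E'.card * (1 - ε) ^ (n - E'.card) else 0)

/-- Network failure probability, equal to 1 for unconnected graphs. -/
def PfFull {k n : ℕ} (e : Fin n → Sym2 (Fin k)) (ε : ℝ) : ℝ :=
  if (toGraph e).Connected then Pf e ε else 1

/-- Size `T(G)` of the left kernel of the incidence matrix. -/
def TG {k n : ℕ} (e : Fin n → Sym2 (Fin k)) : ℕ :=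
  Nat.card {m : Fin k → ZMod 2 // Matrix.vecMul m (inc e) = 0}

/-- Probability that a uniformly random graph of the ensemble is unconnected. -/
def PU (k n : ℕ) : ℝ :=
  (Nat.card {G : Ens k n // ¬ (toGraph G.1).Connected} : ℝ) / Nat.card (Ens k n)

/-!
Write `T(G) = ∑ₘ [m M(G) = 0]` and exchange the sums: the expectation is `∑ₘ P(m M(G) = 0)`.
Over `F₂`, and since edges have two distinct ends, `m M(G) = 0` says that `m` agrees at the two
ends of every edge, i.e. no edge crosses the cut between the support of `m` and its complement.
If `m` has weight `u`, exactly `C(k,2) - u(k-u)` vertex pairs do not cross that cut, so the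
probability is a ratio of falling factorials, which equals
`C(C(k,2) - u(k-u), n) / C(C(k,2), n)`, and there are `C(k,u)` vectors of weight `u`.
-/

open Finset

theorem Sym2.sum_toFinset_eq_zero_iff_map_isDiag {V : Type*} [DecidableEq V] (m : V → ZMod 2)
    {s : Sym2 V} (hs : ¬ s.IsDiag) : ∑ i ∈ s.toFinset, m i = 0 ↔ (s.map m).IsDiag := by
  induction s using Sym2.ind with
  | _ a b =>
    have hab : a ≠ b := fun h => hs (Sym2.mk_isDiag_iff.2 h)
    rw [Sym2.toFinset_mk_eq, sum_pair hab, Sym2.map_mk, Sym2.mk_isDiag_iff,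
      add_eq_zero_iff_eq_neg, ZMod.neg_eq_self_mod_two]

theorem Nat.card_injective_and_forall {ι α : Type*} [Fintype ι] [Fintype α] (P : α → Prop) :
    Nat.card {e : ι → α // Function.Injective e ∧ ∀ j, P (e j)}
      = (Nat.card {a // P a}).descFactorial (Nat.card ι) := by
  let toEmbedding :
      {e : ι → α // Function.Injective e ∧ ∀ j, P (e j)} ≃ (ι ↪ {a // P a}) :=
    { toFun := fun e =>
        ⟨fun j => ⟨e.1 j, e.2.2 j⟩, fun _ _ h => e.2.1 (congrArg Subtype.val h)⟩
      invFun := fun f =>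
        ⟨fun j => f j, fun _ _ h => f.injective (Subtype.ext h), fun j => (f j).2⟩
      left_inv := fun _ => rfl
      right_inv := fun _ => rfl }
  simp only [Nat.card_congr toEmbedding, Nat.card_eq_fintype_card, Fintype.card_embedding_eq]

theorem sum_comp_wt {M : Type*} [AddCommMonoid M] (d : ℕ) (f : ℕ → M) :
    ∑ m : Fin d → ZMod 2, f (wt m) = ∑ u ∈ range (d + 1), d.choose u • f u := by
  have hsupport : ∑ m : Fin d → ZMod 2, f (wt m) = ∑ S : Finset (Fin d), f #S := by
    refine sum_nbij' (fun m => univ.filter fun i => m i ≠ 0) (fun S i => if i ∈ S then 1 else 0)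
      (by simp) (by simp) (fun m _ => funext fun i => ?_) (fun S _ => ?_) (fun _ _ => rfl)
    · simp only [mem_filter, mem_univ, true_and]
      generalize m i = x
      revert x; decide
    · ext i; by_cases h : i ∈ S <;> simp [h]
  rw [hsupport, ← powerset_univ, sum_powerset_apply_card, card_univ, Fintype.card_fin]

variable {k n : ℕ}

theorem vecMul_inc_apply (m : Fin k → ZMod 2) (e : Fin n → Sym2 (Fin k)) (j : Fin n) :
    Matrix.vecMul m (inc e) j = ∑ i ∈ (e j).toFinset, m i := by
  simp only [Matrix.vecMul, dotProduct, inc, Matrix.of_apply, mul_ite, mul_one, mul_zero,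
    ← sum_filter]
  congr 1
  ext i
  simp [Sym2.mem_toFinset]

theorem vecMul_inc_eq_zero_iff (m : Fin k → ZMod 2) {e : Fin n → Sym2 (Fin k)}
    (he : ∀ j, ¬ (e j).IsDiag) :
    Matrix.vecMul m (inc e) = 0 ↔ ∀ j, ((e j).map m).IsDiag := by
  simp only [funext_iff, Pi.zero_apply, vecMul_inc_apply,
    Sym2.sum_toFinset_eq_zero_iff_map_isDiag m (he _)]

theorem card_filter_crosses (V1 : Finset (Fin k)) :
    #(univ.filter (crosses V1)) = #V1 * (k - #V1) := by
  have hcut : univ.filter (crosses V1) = (V1 ×ˢ V1ᶜ).image fun p => s(p.1, p.2) := by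
    ext s
    simp only [mem_filter, mem_univ, true_and, mem_image, mem_product, mem_compl, crosses,
      Prod.exists]
    exact ⟨fun ⟨a, b, hs, ha, hb⟩ => ⟨a, b, ⟨ha, hb⟩, hs.symm⟩,
      fun ⟨a, b, ⟨ha, hb⟩, hs⟩ => ⟨a, b, hs.symm, ha, hb⟩⟩
  have hinj : Set.InjOn (fun p : Fin k × Fin k => s(p.1, p.2)) ↑(V1 ×ˢ V1ᶜ) := by
    rintro ⟨a, b⟩ hab ⟨c, d⟩ hcd h
    simp only [coe_product, coe_compl, Set.mem_prod, mem_coe, Set.mem_compl_iff] at hab hcd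
    rcases Sym2.mk_eq_mk_iff.1 h with h | h
    · exact h
    · simp only [Prod.swap_prod_mk, Prod.mk.injEq] at h
      exact absurd (h.1 ▸ hab.1) hcd.2
  rw [hcut, card_image_of_injOn hinj, card_product, card_compl, Fintype.card_fin]

theorem crosses_support_iff (m : Fin k → ZMod 2) (s : Sym2 (Fin k)) :
    crosses (univ.filter fun i => m i ≠ 0) s ↔ ¬ (s.map m).IsDiag := by
  induction s using Sym2.ind with
  | _ a b =>
    simp only [crosses, mem_filter, mem_univ, true_and, not_not, Sym2.map_mk,
      Sym2.mk_isDiag_iff]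
    constructor
    · rintro ⟨a', b', hab, ha', hb'⟩
      rcases Sym2.eq_iff.1 hab with ⟨rfl, rfl⟩ | ⟨rfl, rfl⟩
      · rwa [hb']
      · rw [hb']; exact Ne.symm ha'
    · intro hab
      have hbinary : ∀ x y : ZMod 2, x ≠ y → x ≠ 0 ∧ y = 0 ∨ y ≠ 0 ∧ x = 0 := by decide
      rcases hbinary _ _ hab with h | h
      · exact ⟨a, b, rfl, h⟩
      · exact ⟨b, a, Sym2.eq_swap, h⟩

theorem card_monochromatic (m : Fin k → ZMod 2) :
    Nat.card {s : Sym2 (Fin k) // ¬ s.IsDiag ∧ (s.map m).IsDiag}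
      = k.choose 2 - wt m * (k - wt m) := by
  have hcross := crosses_support_iff m
  set S := univ.filter fun i => m i ≠ 0
  have hsub : univ.filter (crosses S) ⊆ univ.filter fun s : Sym2 (Fin k) => ¬ s.IsDiag := by
    intro s
    simp only [mem_filter, mem_univ, true_and, hcross]
    exact mt Sym2.IsDiag.map
  have hsplit : univ.filter (fun s : Sym2 (Fin k) => ¬ s.IsDiag ∧ (s.map m).IsDiag)
      = univ.filter (fun s => ¬ s.IsDiag) \ univ.filter (crosses S) := by
    ext s
    simp only [mem_filter, mem_univ, true_and, mem_sdiff, hcross, not_not]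
  rw [Nat.card_eq_fintype_card, Fintype.card_subtype, hsplit, card_sdiff_of_subset hsub,
    card_filter_crosses, ← Fintype.card_subtype, Sym2.card_subtype_not_diag, Fintype.card_fin]
  rfl

theorem card_Ens : Nat.card (Ens k n) = (k.choose 2).descFactorial n := by
  refine (Nat.card_injective_and_forall fun s : Sym2 (Fin k) => ¬ s.IsDiag).trans ?_
  rw [Sym2.natCard_subtype_not_diag, Nat.card_fin, Nat.card_fin]

theorem card_Ens_vecMul_inc_eq_zero (m : Fin k → ZMod 2) :
    Nat.card {G : Ens k n // Matrix.vecMul m (inc G.1) = 0}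
      = (k.choose 2 - wt m * (k - wt m)).descFactorial n := by
  have hker : {G : Ens k n // Matrix.vecMul m (inc G.1) = 0}
      ≃ {e : Fin n → Sym2 (Fin k) //
          Function.Injective e ∧ ∀ j, ¬ (e j).IsDiag ∧ ((e j).map m).IsDiag} :=
    (Equiv.subtypeSubtypeEquivSubtypeInter IsGraph fun e => Matrix.vecMul m (inc e) = 0).trans <|
      Equiv.subtypeEquivRight fun _ =>
        ⟨fun ⟨⟨hinj, he⟩, hker⟩ =>
            ⟨hinj, fun j => ⟨he j, (vecMul_inc_eq_zero_iff m he).1 hker j⟩⟩,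
          fun ⟨hinj, h⟩ => ⟨⟨hinj, fun j => (h j).1⟩,
            (vecMul_inc_eq_zero_iff m fun j => (h j).1).2 fun j => (h j).2⟩⟩
  rw [Nat.card_congr hker,
    Nat.card_injective_and_forall fun s : Sym2 (Fin k) => ¬ s.IsDiag ∧ (s.map m).IsDiag,
    card_monochromatic, Nat.card_fin]

theorem sum_TG_eq_sum_card_Ens :
    ∑ G : Ens k n, TG G.1
      = ∑ m : Fin k → ZMod 2, Nat.card {G : Ens k n // Matrix.vecMul m (inc G.1) = 0} := by
  simp only [TG, Nat.card_eq_fintype_card, Fintype.card_subtype, card_filter]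
  exact sum_comm

theorem Nat.cast_descFactorial_div_cast_descFactorial {K : Type*} [Field K] [CharZero K]
    (a b n : ℕ) : (a.descFactorial n : K) / b.descFactorial n = a.choose n / b.choose n := by
  simp only [Nat.descFactorial_eq_factorial_mul_choose, Nat.cast_mul]
  exact mul_div_mul_left _ _ (Nat.cast_ne_zero.2 n.factorial_ne_zero)

theorem stmt8 (k n : ℕ) :
    (∑ G : Ens k n, (TG G.1 : ℝ)) / Nat.card (Ens k n)
      = ∑ u ∈ Finset.range (k + 1),
          (k.choose u * (k.choose 2 - u * (k - u)).choose n : ℝ) / (k.choose 2).choose n := by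
  have hsum : ∑ G : Ens k n, TG G.1
      = ∑ u ∈ range (k + 1), k.choose u * (k.choose 2 - u * (k - u)).descFactorial n := by
    simp only [sum_TG_eq_sum_card_Ens, card_Ens_vecMul_inc_eq_zero,
      sum_comp_wt k fun u => (k.choose 2 - u * (k - u)).descFactorial n, smul_eq_mul]
  rw [← Nat.cast_sum, hsum, card_Ens, Nat.cast_sum, sum_div]
  refine sum_congr rfl fun u _ => ?_
  rw [Nat.cast_mul, mul_div_assoc, mul_div_assoc, Nat.cast_descFactorial_div_cast_descFactorial]
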